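/- arXiv:1810.05847 — 5 statements merged into one kernel-verified Lean document; each statement's English description precedes it below -/
import Mathlib

section
/- If a Hermitian matrix H ∈ ℂ^{2N×2N} satisfies the positive real lemma inequality diag(H, I_{2n})·M + M^*·diag(H, I_{2n}) ≥ 0 where M = [[χ(A), χ(B)], [χ(C), χ(D)]], then a(H) = E_N⁻¹ · conj(H) · E_N also satisfies the same inequality; hence (H + a(H))/2 is a solution lying in the range of χ. -/
open Matrix
open scoped ComplexOrder

/-- First complex component of a quaternion `x₀ + x₁ i + x₂ j + x₃ k`, namely `x₀ + x₁ i`. -/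
noncomputable def qc1 (q : Quaternion ℝ) : ℂ := ⟨q.re, q.imI⟩

/-- Second complex component of a quaternion, namely `x₂ + x₃ i`. -/
noncomputable def qc2 (q : Quaternion ℝ) : ℂ := ⟨q.imJ, q.imK⟩

/-- The map `χ` on quaternionic matrices: `χ(M₁ + M₂ j) = [[M₁, M₂], [-conj M₂, conj M₁]]`. -/
noncomputable def chiM {p q : Type*} (M : Matrix p q (Quaternion ℝ)) :
    Matrix (p ⊕ p) (q ⊕ q) ℂ :=
  Matrix.fromBlocks (M.map qc1) (M.map qc2)
    (-((M.map qc2).map (starRingEnd ℂ))) ((M.map qc1).map (starRingEnd ℂ))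

/-- The matrix `E_k = [[0, I_k], [-I_k, 0]]`. -/
noncomputable def Emat (k : ℕ) : Matrix (Fin k ⊕ Fin k) (Fin k ⊕ Fin k) ℂ :=
  Matrix.fromBlocks 0 1 (-1) 0

/-!
The range of `χ` consists exactly of the matrices `G` with `J G = conj(G) J`, where `J = -E` is
Mathlib's symplectic matrix `Matrix.J`. Hence `F = diag(J, J)` satisfies `F M = conj(M) F`, and
conjugating the inequality for `H` by `F` and then taking complex conjugates (which preserves
positive semidefiniteness) yields the inequality for `a(H) = Jᴴ conj(H) J`. The inequality is
affine in `H`, so the midpoint `(H + a(H))/2` satisfies it too, and `J` intertwines it with its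
conjugate.
-/

open ComplexConjugate

section ConjMap

variable {m n : Type*}

theorem Matrix.conjTranspose_map_conj (A : Matrix m n ℂ) : (A.map conj)ᴴ = Aᵀ := by
  ext i j; simp

theorem Matrix.PosSemidef.map_conj [Fintype n] {X : Matrix n n ℂ} (hX : X.PosSemidef) :
    (X.map conj).PosSemidef := by
  have hXT : X.map conj = Xᵀ := by
    conv_lhs => rw [← hX.1]
    ext i j; simp
  exact hXT ▸ hX.transpose

variable [Fintype n]

theorem conjTranspose_mul_map_conj_mul_lyapunov {F M : Matrix n n ℂ}
    (hFM : F * M = M.map conj * F) (P : Matrix n n ℂ) :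
    (Fᴴ * P.map conj * F) * M + Mᴴ * (Fᴴ * P.map conj * F) =
      Fᴴ * (P * M + Mᴴ * P).map conj * F := by
  have hMF : Mᴴ * Fᴴ = Fᴴ * Mᵀ := by
    simpa [conjTranspose_mul, conjTranspose_map_conj] using congrArg conjTranspose hFM
  have hMc : Mᴴ.map conj = Mᵀ := by ext i j; simp
  calc (Fᴴ * P.map conj * F) * M + Mᴴ * (Fᴴ * P.map conj * F)
      = Fᴴ * P.map conj * (F * M) + (Mᴴ * Fᴴ) * P.map conj * F := by noncomm_ring
    _ = Fᴴ * (P.map conj * M.map conj + Mᵀ * P.map conj) * F := by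
        rw [hFM, hMF]; noncomm_ring
    _ = Fᴴ * (P * M + Mᴴ * P).map conj * F := by
        rw [Matrix.map_add _ (map_add conj), Matrix.map_mul, Matrix.map_mul, hMc]

theorem Matrix.PosSemidef.conjugate_lyapunov_map_conj {F M P : Matrix n n ℂ}
    (hFM : F * M = M.map conj * F) (hP : (P * M + Mᴴ * P).PosSemidef) :
    ((Fᴴ * P.map conj * F) * M + Mᴴ * (Fᴴ * P.map conj * F)).PosSemidef := by
  rw [conjTranspose_mul_map_conj_mul_lyapunov hFM]
  exact hP.map_conj.conjTranspose_mul_mul_same F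

theorem Matrix.PosSemidef.lyapunov_midpoint {M P₁ P₂ : Matrix n n ℂ}
    (h₁ : (P₁ * M + Mᴴ * P₁).PosSemidef) (h₂ : (P₂ * M + Mᴴ * P₂).PosSemidef) :
    ((2 : ℂ)⁻¹ • (P₁ + P₂) * M + Mᴴ * ((2 : ℂ)⁻¹ • (P₁ + P₂))).PosSemidef := by
  have hsum : (2 : ℂ)⁻¹ • (P₁ + P₂) * M + Mᴴ * ((2 : ℂ)⁻¹ • (P₁ + P₂)) =
      (2 : ℂ)⁻¹ • ((P₁ * M + Mᴴ * P₁) + (P₂ * M + Mᴴ * P₂)) := by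
    simp only [smul_mul_assoc, mul_smul_comm, Matrix.add_mul, Matrix.mul_add, smul_add]
    abel
  rw [hsum]
  exact (h₁.add h₂).smul (inv_nonneg.mpr zero_le_two)

end ConjMap

section BlockDiagonal

variable {m n : Type*}

theorem fromBlocks_half_add [DecidableEq n] (H H' : Matrix m m ℂ) :
    fromBlocks ((2 : ℂ)⁻¹ • (H + H')) 0 0 (1 : Matrix n n ℂ) =
      (2 : ℂ)⁻¹ • (fromBlocks H 0 0 1 + fromBlocks H' 0 0 1) := by
  rw [fromBlocks_add, fromBlocks_smul]
  congr
  · simp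
  · simp
  · rw [← two_smul ℂ (1 : Matrix n n ℂ), smul_smul]; norm_num

variable [Fintype m] [Fintype n]

theorem fromBlocks_diag_mul_eq_map_conj_mul {U : Matrix m m ℂ} {V : Matrix n n ℂ}
    {A : Matrix m m ℂ} {B : Matrix m n ℂ} {C : Matrix n m ℂ} {D : Matrix n n ℂ}
    (hA : U * A = A.map conj * U) (hB : U * B = B.map conj * V)
    (hC : V * C = C.map conj * U) (hD : V * D = D.map conj * V) :
    fromBlocks U 0 0 V * fromBlocks A B C D =
      (fromBlocks A B C D).map conj * fromBlocks U 0 0 V := by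
  simp [fromBlocks_multiply, fromBlocks_map, hA, hB, hC, hD]

variable [DecidableEq n] in
theorem fromBlocks_conjTranspose_mul_map_conj_mul {U : Matrix m m ℂ} {V : Matrix n n ℂ}
    (hV : Vᴴ * V = 1) (H : Matrix m m ℂ) :
    (fromBlocks U 0 0 V)ᴴ * (fromBlocks H 0 0 1).map conj * fromBlocks U 0 0 V =
      fromBlocks (Uᴴ * H.map conj * U) 0 0 1 := by
  simp [fromBlocks_conjTranspose, fromBlocks_map, fromBlocks_multiply, hV]

end BlockDiagonal

section Symplectic

variable {p q : Type*} [DecidableEq p] [DecidableEq q]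

theorem Matrix.J_conjTranspose : (J p ℂ)ᴴ = -J p ℂ := by
  ext (i | i) (j | j) <;> simp [J, one_apply, eq_comm]

variable [Fintype p] [Fintype q]

theorem Matrix.J_conjTranspose_mul_self : (J p ℂ)ᴴ * J p ℂ = 1 := by
  rw [J_conjTranspose, Matrix.neg_mul, J_squared, neg_neg]

theorem J_mul_chiM (M : Matrix p q (Quaternion ℝ)) :
    J p ℂ * chiM M = (chiM M).map conj * J q ℂ := by
  simp only [J, chiM, fromBlocks_multiply, fromBlocks_map, Matrix.map_map]
  ext (i | i) (j | j) <;> simp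

theorem exists_chiM_eq_of_J_mul_eq (G : Matrix (p ⊕ p) (q ⊕ q) ℂ)
    (hG : J p ℂ * G = G.map conj * J q ℂ) : ∃ X, chiM X = G := by
  rw [← fromBlocks_toBlocks G] at hG ⊢
  simp only [J, fromBlocks_multiply, Matrix.zero_mul, Matrix.neg_mul, Matrix.one_mul, zero_add,
    add_zero, fromBlocks_map, Matrix.mul_zero, Matrix.mul_one, Matrix.mul_neg, fromBlocks_inj,
    neg_inj] at hG
  obtain ⟨h₂₁, h₂₂, -⟩ := hG
  rw [neg_eq_iff_eq_neg.mp h₂₁, h₂₂]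
  exact ⟨of fun i j => ⟨(G.toBlocks₁₁ i j).re, (G.toBlocks₁₁ i j).im,
    (G.toBlocks₁₂ i j).re, (G.toBlocks₁₂ i j).im⟩, rfl⟩

theorem J_mul_half_add_conjugate (H : Matrix (p ⊕ p) (p ⊕ p) ℂ) :
    J p ℂ * ((2 : ℂ)⁻¹ • (H + (J p ℂ)ᴴ * H.map conj * J p ℂ)) =
      ((2 : ℂ)⁻¹ • (H + (J p ℂ)ᴴ * H.map conj * J p ℂ)).map conj * J p ℂ := by
  set J := J p ℂ
  have hJJ : J * Jᴴ = 1 := mul_eq_one_comm.mp J_conjTranspose_mul_self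
  have hJc : J.map conj = J := map_J p (starRingEnd ℂ)
  have hJHc : Jᴴ.map conj = Jᴴ := by rw [J_conjTranspose, Matrix.map_neg _ (map_neg conj), hJc]
  have hsum : J * (H + Jᴴ * H.map conj * J) = (H + Jᴴ * H.map conj * J).map conj * J := by
    have hHcc : (H.map conj).map conj = H := by ext; simp
    have hK : J * (Jᴴ * H.map conj * J) = H.map conj * J := by
      rw [← Matrix.mul_assoc, ← Matrix.mul_assoc, hJJ, Matrix.one_mul]
    have hKc : Jᴴ * H * J * J = J * H := by
      rw [Matrix.mul_assoc, J_squared, J_conjTranspose]; noncomm_ring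
    rw [Matrix.map_add _ (map_add conj), Matrix.map_mul, Matrix.map_mul, hJHc, hJc,
      hHcc, Matrix.mul_add, Matrix.add_mul, hK, hKc, add_comm]
  rw [Matrix.map_smul' _ _ _ (map_mul conj), mul_smul_comm, smul_mul_assoc, hsum,
    map_inv₀, map_ofNat]

end Symplectic

theorem Emat_inv_mul_mul_Emat (k : ℕ) (X : Matrix (Fin k ⊕ Fin k) (Fin k ⊕ Fin k) ℂ) :
    (Emat k)⁻¹ * X * Emat k = (J (Fin k) ℂ)ᴴ * X * J (Fin k) ℂ := by
  have hE : Emat k = -J (Fin k) ℂ := by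
    simp [Emat, J, fromBlocks_neg]
  have hEinv : (Emat k)⁻¹ = J (Fin k) ℂ := by
    rw [hE]
    exact Matrix.inv_eq_right_inv (by rw [Matrix.neg_mul, J_squared, neg_neg])
  rw [hEinv, hE, J_conjTranspose]
  noncomm_ring

theorem stmt5_general {N n : ℕ}
    (A : Matrix (Fin N) (Fin N) (Quaternion ℝ)) (B : Matrix (Fin N) (Fin n) (Quaternion ℝ))
    (C : Matrix (Fin n) (Fin N) (Quaternion ℝ)) (D : Matrix (Fin n) (Fin n) (Quaternion ℝ))
    (H : Matrix (Fin N ⊕ Fin N) (Fin N ⊕ Fin N) ℂ)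
    (h : ((Matrix.fromBlocks H 0 0 (1 : Matrix (Fin n ⊕ Fin n) (Fin n ⊕ Fin n) ℂ)) *
          (Matrix.fromBlocks (chiM A) (chiM B) (chiM C) (chiM D)) +
          (Matrix.fromBlocks (chiM A) (chiM B) (chiM C) (chiM D))ᴴ *
          (Matrix.fromBlocks H 0 0 1)).PosSemidef) :
    ((Matrix.fromBlocks ((Emat N)⁻¹ * H.map (starRingEnd ℂ) * Emat N) 0 0
          (1 : Matrix (Fin n ⊕ Fin n) (Fin n ⊕ Fin n) ℂ) *
        (Matrix.fromBlocks (chiM A) (chiM B) (chiM C) (chiM D)) +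
        (Matrix.fromBlocks (chiM A) (chiM B) (chiM C) (chiM D))ᴴ *
        (Matrix.fromBlocks ((Emat N)⁻¹ * H.map (starRingEnd ℂ) * Emat N) 0 0 1)).PosSemidef) ∧
    (∃ X : Matrix (Fin N) (Fin N) (Quaternion ℝ),
      chiM X = (2 : ℂ)⁻¹ • (H + (Emat N)⁻¹ * H.map (starRingEnd ℂ) * Emat N)) ∧
    ((Matrix.fromBlocks ((2 : ℂ)⁻¹ • (H + (Emat N)⁻¹ * H.map (starRingEnd ℂ) * Emat N)) 0 0
          (1 : Matrix (Fin n ⊕ Fin n) (Fin n ⊕ Fin n) ℂ) *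
        (Matrix.fromBlocks (chiM A) (chiM B) (chiM C) (chiM D)) +
        (Matrix.fromBlocks (chiM A) (chiM B) (chiM C) (chiM D))ᴴ *
        (Matrix.fromBlocks ((2 : ℂ)⁻¹ • (H + (Emat N)⁻¹ * H.map (starRingEnd ℂ) * Emat N)) 0 0 1)
        ).PosSemidef) := by
  simp only [Emat_inv_mul_mul_Emat]
  have hFM := fromBlocks_diag_mul_eq_map_conj_mul
    (J_mul_chiM A) (J_mul_chiM B) (J_mul_chiM C) (J_mul_chiM D)
  have haH := h.conjugate_lyapunov_map_conj hFM
  rw [fromBlocks_conjTranspose_mul_map_conj_mul J_conjTranspose_mul_self] at haH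
  refine ⟨haH, exists_chiM_eq_of_J_mul_eq _ (J_mul_half_add_conjugate H), ?_⟩
  rw [fromBlocks_half_add]
  exact h.lyapunov_midpoint haH

/-- If a Hermitian `H` satisfies the positive real lemma inequality for
`M = [[χ(A), χ(B)], [χ(C), χ(D)]]`, then so does `a(H) = E_N⁻¹ conj(H) E_N`; hence
`(H + a(H))/2` is a solution lying in the range of `χ`. -/
theorem stmt5 {N n : ℕ}
    (A : Matrix (Fin N) (Fin N) (Quaternion ℝ)) (B : Matrix (Fin N) (Fin n) (Quaternion ℝ))
    (C : Matrix (Fin n) (Fin N) (Quaternion ℝ)) (D : Matrix (Fin n) (Fin n) (Quaternion ℝ))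
    (H : Matrix (Fin N ⊕ Fin N) (Fin N ⊕ Fin N) ℂ) (hH : H.IsHermitian)
    (h : ((Matrix.fromBlocks H 0 0 (1 : Matrix (Fin n ⊕ Fin n) (Fin n ⊕ Fin n) ℂ)) *
          (Matrix.fromBlocks (chiM A) (chiM B) (chiM C) (chiM D)) +
          (Matrix.fromBlocks (chiM A) (chiM B) (chiM C) (chiM D))ᴴ *
          (Matrix.fromBlocks H 0 0 1)).PosSemidef) :
    ((Matrix.fromBlocks ((Emat N)⁻¹ * H.map (starRingEnd ℂ) * Emat N) 0 0
          (1 : Matrix (Fin n ⊕ Fin n) (Fin n ⊕ Fin n) ℂ) *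
        (Matrix.fromBlocks (chiM A) (chiM B) (chiM C) (chiM D)) +
        (Matrix.fromBlocks (chiM A) (chiM B) (chiM C) (chiM D))ᴴ *
        (Matrix.fromBlocks ((Emat N)⁻¹ * H.map (starRingEnd ℂ) * Emat N) 0 0 1)).PosSemidef) ∧
    (∃ X : Matrix (Fin N) (Fin N) (Quaternion ℝ),
      chiM X = (2 : ℂ)⁻¹ • (H + (Emat N)⁻¹ * H.map (starRingEnd ℂ) * Emat N)) ∧
    ((Matrix.fromBlocks ((2 : ℂ)⁻¹ • (H + (Emat N)⁻¹ * H.map (starRingEnd ℂ) * Emat N)) 0 0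
          (1 : Matrix (Fin n ⊕ Fin n) (Fin n ⊕ Fin n) ℂ) *
        (Matrix.fromBlocks (chiM A) (chiM B) (chiM C) (chiM D)) +
        (Matrix.fromBlocks (chiM A) (chiM B) (chiM C) (chiM D))ᴴ *
        (Matrix.fromBlocks ((2 : ℂ)⁻¹ • (H + (Emat N)⁻¹ * H.map (starRingEnd ℂ) * Emat N)) 0 0 1)
        ).PosSemidef) :=
  stmt5_general A B C D H h
end

section
/- Let (A, B, C, D) ∈ ℂ^{N×N} × ℂ^{N×n} × ℂ^{n×N} × ℂ^{n×n}, let H ∈ ℂ^{N×N} be an invertible Hermitian matrix, and write the block matrix [[Q, S], [S^*, R]] := diag(H, I_n)·[[A,B],[C,D]] + [[A,B],[C,D]]^*·diag(H, I_n), so that Q = HA + A^*H, S = HB + C^*, R = D + D^*. Then for the function φ(x) = D + C(xI - A)⁻¹B and all real x, y where the resolvents exist and x + y ≠ 0, one has φ(x) + φ(y)^* = (x+y)·[-C(xI-A)⁻¹H⁻¹(yI-A^*)⁻¹C^*] + [C(xI-A)⁻¹H⁻¹, I]·[[Q,S],[S^*,R]]·[H⁻¹(yI-A^*)⁻¹C^*;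 I]. -/
open Matrix

/-! Everything reduces to the resolvent relations `(xI - A)⁻¹A = x(xI - A)⁻¹ - I` and
`A^*(yI - A^*)⁻¹ = y(yI - A^*)⁻¹ - I`. Sandwiching `Q = HA + A^*H` between `C(xI - A)⁻¹H⁻¹` and
`H⁻¹(yI - A^*)⁻¹C^*` therefore yields `x + y` times `C(xI - A)⁻¹H⁻¹(yI - A^*)⁻¹C^*` minus two
cross terms, and these cancel against the `C^*` parts of `S` and `S^*`. -/

namespace Matrix

variable {R : Type*} [CommRing R] {l m p : Type*} [Fintype m] [DecidableEq m]

theorem nonsing_inv_mul_eq_smul_sub_one {A : Matrix m m R} {x : R} (hx : IsUnit (x • 1 - A)) :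
    (x • 1 - A)⁻¹ * A = x • (x • 1 - A)⁻¹ - 1 := by
  have h := nonsing_inv_mul _ ((isUnit_iff_isUnit_det _).mp hx)
  rw [Matrix.mul_sub, Matrix.mul_smul, Matrix.mul_one] at h
  exact eq_sub_of_add_eq (sub_eq_iff_eq_add'.mp h).symm

theorem mul_nonsing_inv_eq_smul_sub_one {A : Matrix m m R} {x : R} (hx : IsUnit (x • 1 - A)) :
    A * (x • 1 - A)⁻¹ = x • (x • 1 - A)⁻¹ - 1 := by
  have h := mul_nonsing_inv _ ((isUnit_iff_isUnit_det _).mp hx)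
  rw [Matrix.sub_mul, Matrix.smul_mul, Matrix.one_mul] at h
  exact eq_sub_of_add_eq (sub_eq_iff_eq_add'.mp h).symm

theorem resolvent_sandwich {A A' H : Matrix m m R} {x y : R} (hx : IsUnit (x • 1 - A))
    (hy : IsUnit (y • 1 - A')) (hH : IsUnit H) (L : Matrix l m R) (M : Matrix m p R) :
    L * (x • 1 - A)⁻¹ * H⁻¹ * (H * A + A' * H) * (H⁻¹ * (y • 1 - A')⁻¹ * M) =
      (x + y) • (L * (x • 1 - A)⁻¹ * H⁻¹ * (y • 1 - A')⁻¹ * M) -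
        L * H⁻¹ * (y • 1 - A')⁻¹ * M - L * (x • 1 - A)⁻¹ * H⁻¹ * M := by
  have hH' := (isUnit_iff_isUnit_det H).mp hH
  have hmid : (x • 1 - A)⁻¹ * H⁻¹ * (H * A + A' * H) * H⁻¹ * (y • 1 - A')⁻¹ =
      (x + y) • ((x • 1 - A)⁻¹ * H⁻¹ * (y • 1 - A')⁻¹) - H⁻¹ * (y • 1 - A')⁻¹ -
        (x • 1 - A)⁻¹ * H⁻¹ := by
    calc _ = (x • 1 - A)⁻¹ * A * H⁻¹ * (y • 1 - A')⁻¹ +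
          (x • 1 - A)⁻¹ * H⁻¹ * (A' * (y • 1 - A')⁻¹) := by
          simp only [Matrix.mul_add, Matrix.add_mul, Matrix.mul_assoc,
            mul_nonsing_inv_cancel_left _ _ hH', nonsing_inv_mul_cancel_left _ _ hH']
      _ = _ := by
          rw [nonsing_inv_mul_eq_smul_sub_one hx, mul_nonsing_inv_eq_smul_sub_one hy]
          simp only [Matrix.sub_mul, Matrix.mul_sub, Matrix.smul_mul, Matrix.mul_smul,
            Matrix.one_mul, Matrix.mul_one, add_smul]
          abel
  calc _ = L * ((x • 1 - A)⁻¹ * H⁻¹ * (H * A + A' * H) * H⁻¹ * (y • 1 - A')⁻¹) * M := by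
        simp only [Matrix.mul_assoc]
    _ = _ := by
        rw [hmid]
        simp only [Matrix.sub_mul, Matrix.mul_sub, Matrix.smul_mul, Matrix.mul_smul,
          Matrix.mul_assoc]

theorem conjTranspose_resolvent [StarRing R] (A : Matrix m m R) (c : R) :
    ((c • 1 - A)⁻¹)ᴴ = (star c • 1 - Aᴴ)⁻¹ := by
  rw [conjTranspose_nonsing_inv, conjTranspose_sub, conjTranspose_smul, conjTranspose_one]

end Matrix

theorem stmt6_general {N n : ℕ}
    (A : Matrix (Fin N) (Fin N) ℂ) (B : Matrix (Fin N) (Fin n) ℂ)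
    (C : Matrix (Fin n) (Fin N) ℂ) (D : Matrix (Fin n) (Fin n) ℂ)
    (H : Matrix (Fin N) (Fin N) ℂ) (hH : H.IsHermitian) (hHinv : IsUnit H)
    (Q S R : Matrix _ _ ℂ)
    (hQ : Q = H * A + Aᴴ * H) (hS : S = H * B + Cᴴ) (hR : R = D + Dᴴ)
    (φ : ℝ → Matrix (Fin n) (Fin n) ℂ)
    (hφ : ∀ t : ℝ, φ t = D + C * ((t : ℂ) • (1 : Matrix (Fin N) (Fin N) ℂ) - A)⁻¹ * B)
    (x y : ℝ)
    (hx : IsUnit ((x : ℂ) • (1 : Matrix (Fin N) (Fin N) ℂ) - A))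
    (hy : IsUnit ((y : ℂ) • (1 : Matrix (Fin N) (Fin N) ℂ) - Aᴴ)) :
    φ x + (φ y)ᴴ =
      ((x : ℂ) + (y : ℂ)) •
        (-(C * ((x : ℂ) • 1 - A)⁻¹ * H⁻¹ * ((y : ℂ) • 1 - Aᴴ)⁻¹ * Cᴴ)) +
      (C * ((x : ℂ) • 1 - A)⁻¹ * H⁻¹ * Q * (H⁻¹ * ((y : ℂ) • 1 - Aᴴ)⁻¹ * Cᴴ) +
       C * ((x : ℂ) • 1 - A)⁻¹ * H⁻¹ * S +
       Sᴴ * (H⁻¹ * ((y : ℂ) • 1 - Aᴴ)⁻¹ * Cᴴ) + R) := by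
  have hdH := (isUnit_iff_isUnit_det H).mp hHinv
  set X := ((x : ℂ) • (1 : Matrix (Fin N) (Fin N) ℂ) - A)⁻¹
  set Y := ((y : ℂ) • (1 : Matrix (Fin N) (Fin N) ℂ) - Aᴴ)⁻¹
  have hφy : (φ y)ᴴ = Dᴴ + Bᴴ * Y * Cᴴ := by
    rw [hφ, conjTranspose_add, conjTranspose_mul, conjTranspose_mul, conjTranspose_resolvent,
      Complex.star_def, Complex.conj_ofReal, Matrix.mul_assoc]
  have hQ_term : C * X * H⁻¹ * Q * (H⁻¹ * Y * Cᴴ) =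
      ((x : ℂ) + y) • (C * X * H⁻¹ * Y * Cᴴ) - C * H⁻¹ * Y * Cᴴ - C * X * H⁻¹ * Cᴴ := by
    rw [hQ]
    exact resolvent_sandwich hx hy hHinv C Cᴴ
  have hS_left : C * X * H⁻¹ * S = C * X * B + C * X * H⁻¹ * Cᴴ := by
    rw [hS, Matrix.mul_add, Matrix.mul_assoc _ H⁻¹, nonsing_inv_mul_cancel_left _ _ hdH]
  have hS_right : Sᴴ * (H⁻¹ * Y * Cᴴ) = Bᴴ * Y * Cᴴ + C * H⁻¹ * Y * Cᴴ := by
    rw [hS, conjTranspose_add, conjTranspose_mul, hH.eq, conjTranspose_conjTranspose,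
      Matrix.add_mul]
    simp only [Matrix.mul_assoc, mul_nonsing_inv_cancel_left _ _ hdH]
  rw [hφ x, hφy, hQ_term, hS_left, hS_right, hR]
  module

/-- The positive real lemma factorization identity: with `Q = HA + A^*H`,
`S = HB + C^*`, `R = D + D^*` and `φ(x) = D + C(xI - A)⁻¹B`, for real `x, y`
where the resolvents exist and `x + y ≠ 0`,
`φ(x) + φ(y)^* = (x+y)·[-C(xI-A)⁻¹H⁻¹(yI-A^*)⁻¹C^*]
  + [C(xI-A)⁻¹H⁻¹, I]·[[Q,S],[S^*,R]]·[H⁻¹(yI-A^*)⁻¹C^*; I]`. -/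
theorem stmt6 {N n : ℕ}
    (A : Matrix (Fin N) (Fin N) ℂ) (B : Matrix (Fin N) (Fin n) ℂ)
    (C : Matrix (Fin n) (Fin N) ℂ) (D : Matrix (Fin n) (Fin n) ℂ)
    (H : Matrix (Fin N) (Fin N) ℂ) (hH : H.IsHermitian) (hHinv : IsUnit H)
    (Q S R : Matrix _ _ ℂ)
    (hQ : Q = H * A + Aᴴ * H) (hS : S = H * B + Cᴴ) (hR : R = D + Dᴴ)
    (φ : ℝ → Matrix (Fin n) (Fin n) ℂ)
    (hφ : ∀ t : ℝ, φ t = D + C * ((t : ℂ) • (1 : Matrix (Fin N) (Fin N) ℂ) - A)⁻¹ * B)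
    (x y : ℝ)
    (hx : IsUnit ((x : ℂ) • (1 : Matrix (Fin N) (Fin N) ℂ) - A))
    (hy : IsUnit ((y : ℂ) • (1 : Matrix (Fin N) (Fin N) ℂ) - Aᴴ))
    (hxy : x + y ≠ 0) :
    φ x + (φ y)ᴴ =
      ((x : ℂ) + (y : ℂ)) •
        (-(C * ((x : ℂ) • 1 - A)⁻¹ * H⁻¹ * ((y : ℂ) • 1 - Aᴴ)⁻¹ * Cᴴ)) +
      (C * ((x : ℂ) • 1 - A)⁻¹ * H⁻¹ * Q * (H⁻¹ * ((y : ℂ) • 1 - Aᴴ)⁻¹ * Cᴴ) +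
       C * ((x : ℂ) • 1 - A)⁻¹ * H⁻¹ * S +
       Sᴴ * (H⁻¹ * ((y : ℂ) • 1 - Aᴴ)⁻¹ * Cᴴ) + R) :=
  stmt6_general A B C D H hH hHinv Q S R hQ hS hR φ hφ x y hx hy
end

section
/- Let (A, B, C, D) be complex matrices of sizes N×N, N×n, n×N, n×n and let H ∈ ℂ^{N×N} be Hermitian with Q = HA + A^*H, S = HB + C^*, R = D + D^*. Then for φ(x) = D + C(xI-A)⁻¹B and real x, y with resolvents defined, φ(x) + φ(y)^* = (x+y)·[-B^*(yI-A^*)⁻¹H(xI-A)⁻¹B] + [B^*(yI-A^*)⁻¹, I]·[[Q,S],[S^*,R]]·[(xI-A)⁻¹B; I]. -/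
open Matrix

/-!
With `M = xI - A` and `W = yI - A^*` we have `Q = (x+y)H - WH - HM`. Sandwiched between
`B^*W⁻¹` and `M⁻¹B`, the last two terms become `-B^*HM⁻¹B - B^*W⁻¹HB`, which cancel the
`H`-parts of `B^*W⁻¹S + S^*M⁻¹B`; the rest of these cross terms is
`B^*W⁻¹C^* + CM⁻¹B = (φ(y) - D)^* + (φ(x) - D)`.
-/

namespace Matrix

variable {ι l k R : Type*} [Fintype ι] [DecidableEq ι] [CommRing R]

theorem mul_add_mul_eq_smul_sub_sub (H A A' : Matrix ι ι R) (x y : R) :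
    H * A + A' * H = (x + y) • H - (y • 1 - A') * H - H * (x • 1 - A) := by
  simp only [Matrix.sub_mul, Matrix.mul_sub, Matrix.smul_mul, Matrix.mul_smul, Matrix.one_mul,
    Matrix.mul_one, add_smul]
  abel

theorem mul_inv_mul_smul_sub_sub_mul_inv_mul (L : Matrix l ι R) (B : Matrix ι k R)
    (H M W : Matrix ι ι R) (s : R) (hM : IsUnit M) (hW : IsUnit W) :
    L * W⁻¹ * (s • H - W * H - H * M) * (M⁻¹ * B) =
      s • (L * W⁻¹ * H * M⁻¹ * B) - L * H * (M⁻¹ * B) - L * W⁻¹ * (H * B) := by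
  rw [isUnit_iff_isUnit_det] at hM hW
  simp only [Matrix.mul_sub, Matrix.sub_mul, Matrix.mul_smul, Matrix.smul_mul, Matrix.mul_assoc,
    mul_nonsing_inv_cancel_left _ _ hM, nonsing_inv_mul_cancel_left _ _ hW]

theorem conjTranspose_inv_smul_one_sub [StarRing R] (A : Matrix ι ι R) {c : R}
    (hc : star c = c) : (c • (1 : Matrix ι ι R) - A)⁻¹ᴴ = (c • 1 - Aᴴ)⁻¹ := by
  rw [conjTranspose_nonsing_inv, conjTranspose_sub, conjTranspose_smul, conjTranspose_one, hc]

end Matrix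

/-- With `Q = HA + A^*H`, `S = HB + C^*`, `R = D + D^*` and
`φ(x) = D + C(xI-A)⁻¹B`, for real `x, y` with resolvents defined:
`φ(x) + φ(y)^* = (x+y)·[-B^*(yI-A^*)⁻¹H(xI-A)⁻¹B]
  + [B^*(yI-A^*)⁻¹, I]·[[Q,S],[S^*,R]]·[(xI-A)⁻¹B; I]`. -/
theorem stmt7 {N n : ℕ}
    (A : Matrix (Fin N) (Fin N) ℂ) (B : Matrix (Fin N) (Fin n) ℂ)
    (C : Matrix (Fin n) (Fin N) ℂ) (D : Matrix (Fin n) (Fin n) ℂ)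
    (H : Matrix (Fin N) (Fin N) ℂ) (hH : H.IsHermitian)
    (Q S R : Matrix _ _ ℂ)
    (hQ : Q = H * A + Aᴴ * H) (hS : S = H * B + Cᴴ) (hR : R = D + Dᴴ)
    (φ : ℝ → Matrix (Fin n) (Fin n) ℂ)
    (hφ : ∀ t : ℝ, φ t = D + C * ((t : ℂ) • (1 : Matrix (Fin N) (Fin N) ℂ) - A)⁻¹ * B)
    (x y : ℝ)
    (hx : IsUnit ((x : ℂ) • (1 : Matrix (Fin N) (Fin N) ℂ) - A))
    (hy : IsUnit ((y : ℂ) • (1 : Matrix (Fin N) (Fin N) ℂ) - Aᴴ)) :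
    φ x + (φ y)ᴴ =
      ((x : ℂ) + (y : ℂ)) •
        (-(Bᴴ * ((y : ℂ) • 1 - Aᴴ)⁻¹ * H * ((x : ℂ) • 1 - A)⁻¹ * B)) +
      (Bᴴ * ((y : ℂ) • 1 - Aᴴ)⁻¹ * Q * (((x : ℂ) • 1 - A)⁻¹ * B) +
       Bᴴ * ((y : ℂ) • 1 - Aᴴ)⁻¹ * S +
       Sᴴ * (((x : ℂ) • 1 - A)⁻¹ * B) + R) := by
  rw [hQ, mul_add_mul_eq_smul_sub_sub H A Aᴴ x y,
    mul_inv_mul_smul_sub_sub_mul_inv_mul _ _ _ _ _ _ hx hy, hφ, hφ, hS, hR]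
  simp only [conjTranspose_add, conjTranspose_mul, conjTranspose_conjTranspose,
    conjTranspose_inv_smul_one_sub A (Complex.conj_ofReal y), hH.eq, Matrix.mul_add,
    Matrix.add_mul, Matrix.mul_assoc]
  module
end

section
/- Suppose (A,B,C,D) are complex matrices of sizes N×N, N×n, n×N, n×n, and H ∈ ℂ^{N×N} is a negative definite Hermitian matrix such that diag(H, I_n)·[[A,B],[C,D]] + [[A,B],[C,D]]^*·diag(H, I_n) ≥ 0. Then the kernel K(x,y) = (φ(x) + φ(y)^*)/(x+y), where φ(x) = D + C(xI-A)⁻¹B, is positive semidefinite on the set of positive real x where xI - A is invertible: for any finitely many points x₁,...,x_M > 0 with x_kI - A invertible and vectors c₁,...,c_M ∈ ℂⁿ, the Hermitian matrix with (k,l) entry c_k^* K(x_k, x_l) c_l is positive semidefinite. -/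
/-!
With `S = [[A, B], [C, D]]`, conjugating the hypothesis by `diag(H⁻¹, 1)` turns it into the dual
inequality `S F + F Sᴴ ≥ 0` for `F = diag(K, 1)`, `K = H⁻¹ ≤ 0`. For `Y s = (C (s - A)⁻¹)ᴴ` and
`V s = [Y s; 1]` one has `Sᴴ V s = [s̄ Y s; φ(s)ᴴ]`, hence
`V sᴴ (S F + F Sᴴ) V t = φ(s) + φ(t)ᴴ + (s + t̄) Y sᴴ K Y t`.
Dividing by `x_k + x_l`, the kernel matrix becomes the Hadamard product of the Cauchy matrix
`1 / (x_k + x_l)` with a Gram matrix of `S F + F Sᴴ`, plus a Gram matrix of `-K`. The Cauchy matrix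
is the Gram matrix of the functions `t ↦ exp (-x_k t)` in `L²(0, ∞)`, so the Schur product theorem
finishes the proof.
-/

open Matrix MeasureTheory
open scoped ComplexOrder

namespace Matrix

variable {ι k m n R : Type*} [Fintype k] [Fintype m] [Fintype n]

section Ring

variable [Ring R] [StarRing R]

theorem PosSemidef.mul_add_mul_conjTranspose_of_inverse [PartialOrder R] [DecidableEq k]
    {E F S : Matrix k k R} (h : (E * S + Sᴴ * E).PosSemidef) (hF : F.IsHermitian) (hFE : F * E = 1)
    (hEF : E * F = 1) : (S * F + F * Sᴴ).PosSemidef := by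
  have key : F * (E * S + Sᴴ * E) * F = S * F + F * Sᴴ := by
    rw [Matrix.mul_add, Matrix.add_mul, ← Matrix.mul_assoc, hFE, Matrix.one_mul,
      Matrix.mul_assoc, Matrix.mul_assoc, hEF, Matrix.mul_one]
  simpa only [hF.eq, key] using h.conjTranspose_mul_mul_same F

theorem conjTranspose_mul_add_mul_conjTranspose_mul {F : Matrix k k R} (hF : F.IsHermitian)
    (S : Matrix k k R) (V W : Matrix k ι R) :
    Vᴴ * (S * F + F * Sᴴ) * W = (Sᴴ * V)ᴴ * (F * W) + (F * V)ᴴ * (Sᴴ * W) := by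
  simp only [conjTranspose_mul, conjTranspose_conjTranspose, hF.eq, Matrix.mul_add,
    Matrix.add_mul, Matrix.mul_assoc]

theorem conjTranspose_mul_mul_of_apply (u : ι → k → R) (M : Matrix k k R) (i j : ι) :
    ((of fun a i => u i a)ᴴ * M * of fun a i => u i a) i j = star (u i) ⬝ᵥ M *ᵥ u j := by
  rw [dotProduct_mulVec, mul_apply']
  rfl

theorem star_mulVec_dotProduct_mulVec_mulVec [Fintype ι] (V : Matrix k n R) (M : Matrix k k R)
    (W : Matrix k ι R) (v : n → R) (w : ι → R) :
    star (V *ᵥ v) ⬝ᵥ M *ᵥ (W *ᵥ w) = star v ⬝ᵥ (Vᴴ * M * W) *ᵥ w := by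
  rw [mulVec_mulVec, dotProduct_mulVec, star_mulVec, vecMul_vecMul, ← dotProduct_mulVec,
    Matrix.mul_assoc]

end Ring

section CommRing

variable [CommRing R] [DecidableEq n]

theorem fromBlocks_mul_fromRows_one (K : Matrix m m R) (X : Matrix m n R) :
    fromBlocks K 0 0 (1 : Matrix n n R) * (fromRows X 1 : Matrix (m ⊕ n) n R) =
      fromRows (K * X) 1 := by
  simp [fromBlocks_mul_fromRows]

variable [DecidableEq m]

theorem nonsing_inv_smul_one_sub_mul (A : Matrix m m R) {s : R} (hs : IsUnit (s • 1 - A)) :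
    (s • 1 - A)⁻¹ * A = s • (s • 1 - A)⁻¹ - 1 := by
  have := nonsing_inv_mul _ ((isUnit_iff_isUnit_det _).mp hs)
  rw [Matrix.mul_sub, mul_smul_comm, Matrix.mul_one] at this
  exact eq_sub_of_add_eq (sub_eq_iff_eq_add'.mp this).symm

variable [StarRing R] (A : Matrix m m R) (B : Matrix m n R) (C : Matrix n m R) (D : Matrix n n R)

theorem conjTranspose_fromBlocks_mul_fromRows {s : R} (hs : IsUnit (s • 1 - A)) :
    (fromBlocks A B C D)ᴴ * fromRows (C * (s • 1 - A)⁻¹)ᴴ (1 : Matrix n n R) =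
      fromRows (star s • (C * (s • 1 - A)⁻¹)ᴴ) (D + C * (s • 1 - A)⁻¹ * B)ᴴ := by
  rw [fromBlocks_conjTranspose, fromBlocks_mul_fromRows]
  congr 1
  · rw [Matrix.mul_one, ← conjTranspose_mul, ← conjTranspose_add, ← conjTranspose_smul,
      Matrix.mul_assoc, nonsing_inv_smul_one_sub_mul A hs]
    simp [Matrix.mul_sub]
  · simp [conjTranspose_add, conjTranspose_mul, Matrix.mul_assoc, add_comm]

theorem conjTranspose_fromRows_mul_mul_fromRows {K : Matrix m m R} (hK : K.IsHermitian)
    {s t : R} (hs : IsUnit (s • 1 - A)) (ht : IsUnit (t • 1 - A)) :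
    (fromRows (C * (s • 1 - A)⁻¹)ᴴ (1 : Matrix n n R))ᴴ *
        (fromBlocks A B C D * fromBlocks K 0 0 1 + fromBlocks K 0 0 1 * (fromBlocks A B C D)ᴴ) *
        fromRows (C * (t • 1 - A)⁻¹)ᴴ (1 : Matrix n n R) =
      (D + C * (s • 1 - A)⁻¹ * B) + (D + C * (t • 1 - A)⁻¹ * B)ᴴ +
        (s + star t) • (C * (s • 1 - A)⁻¹ * K * (C * (t • 1 - A)⁻¹)ᴴ) := by
  have hF : (fromBlocks K 0 0 (1 : Matrix n n R)).IsHermitian := by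
    simp [IsHermitian, fromBlocks_conjTranspose, hK.eq]
  rw [conjTranspose_mul_add_mul_conjTranspose_mul hF,
    conjTranspose_fromBlocks_mul_fromRows A B C D hs,
    conjTranspose_fromBlocks_mul_fromRows A B C D ht, fromBlocks_mul_fromRows_one,
    fromBlocks_mul_fromRows_one, conjTranspose_fromRows_eq_fromCols_conjTranspose,
    conjTranspose_fromRows_eq_fromCols_conjTranspose, fromCols_mul_fromRows,
    fromCols_mul_fromRows]
  simp only [conjTranspose_smul, conjTranspose_conjTranspose, conjTranspose_mul, hK.eq,
    conjTranspose_one, star_star, Matrix.mul_one, Matrix.one_mul, Matrix.smul_mul, Matrix.mul_smul,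
    add_smul, Matrix.mul_assoc]
  abel

end CommRing

end Matrix

lemma memLp_two_exp_neg_mul {a : ℝ} (ha : 0 < a) :
    MemLp (fun t : ℝ => (Real.exp (-(a * t)) : ℂ)) 2 (volume.restrict (Set.Ioi 0)) := by
  rw [memLp_two_iff_integrable_sq_norm (by fun_prop)]
  have hint : IntegrableOn (fun t : ℝ => Real.exp (-((2 * a) * t))) (Set.Ioi 0) := by
    simpa only [neg_mul] using exp_neg_integrableOn_Ioi 0 (by positivity : 0 < 2 * a)
  refine hint.congr_fun (fun t _ => ?_) measurableSet_Ioi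
  rw [Complex.norm_real, Real.norm_of_nonneg (Real.exp_pos _).le, ← Real.exp_nat_mul]
  push_cast; ring_nf

theorem posSemidef_cauchy {ι : Type*} [Fintype ι] (x : ι → ℝ) (hx : ∀ i, 0 < x i) :
    (of fun i j => ((x i : ℂ) + x j)⁻¹).PosSemidef := by
  let e : ι → Lp ℂ 2 (volume.restrict (Set.Ioi (0 : ℝ))) := fun i =>
    (memLp_two_exp_neg_mul (hx i)).toLp _
  suffices h : of (fun i j => ((x i : ℂ) + x j)⁻¹) = gram ℂ e from h ▸ posSemidef_gram ℂ e
  ext i j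
  rw [of_apply, gram_apply, L2.inner_def]
  have hij : 0 < x i + x j := add_pos (hx i) (hx j)
  calc ((x i : ℂ) + x j)⁻¹ = ((∫ t in Set.Ioi 0, Real.exp (-(x i + x j) * t) : ℝ) : ℂ) := by
        rw [integral_exp_mul_Ioi (by linarith)]
        push_cast
        rw [mul_zero, Complex.exp_zero, neg_div_neg_eq, one_div]
    _ = _ := by
        rw [← integral_complex_ofReal]
        refine integral_congr_ae ?_
        filter_upwards [(memLp_two_exp_neg_mul (hx i)).coeFn_toLp,
          (memLp_two_exp_neg_mul (hx j)).coeFn_toLp] with t hi hj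
        rw [hi, hj, RCLike.inner_apply, Complex.conj_ofReal, ← Complex.ofReal_mul, ← Real.exp_add]
        ring_nf

theorem posSemidef_transferKernel_of_dual_kyp {ι m n : Type*} [Fintype ι] [Fintype m]
    [Fintype n] [DecidableEq m] [DecidableEq n] (A : Matrix m m ℂ) (B : Matrix m n ℂ)
    (C : Matrix n m ℂ) (D : Matrix n n ℂ) {K : Matrix m m ℂ} (hK : (-K).PosSemidef)
    (hM : (fromBlocks A B C D * fromBlocks K 0 0 1 +
      fromBlocks K 0 0 1 * (fromBlocks A B C D)ᴴ).PosSemidef)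
    (φ : ℝ → Matrix n n ℂ) (hφ : ∀ t : ℝ, φ t = D + C * ((t : ℂ) • 1 - A)⁻¹ * B)
    (x : ι → ℝ) (hx : ∀ k, 0 < x k) (hu : ∀ k, IsUnit ((x k : ℂ) • (1 : Matrix m m ℂ) - A))
    (c : ι → n → ℂ) :
    (of fun k l => star (c k) ⬝ᵥ ((((x k : ℂ) + x l)⁻¹ • (φ (x k) + (φ (x l))ᴴ)) *ᵥ c l)
      ).PosSemidef := by
  set P := fromBlocks A B C D * fromBlocks K 0 0 1 + fromBlocks K 0 0 1 * (fromBlocks A B C D)ᴴ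
  set Y : ι → Matrix m n ℂ := fun k => (C * ((x k : ℂ) • 1 - A)⁻¹)ᴴ
  set V : ι → Matrix (m ⊕ n) n ℂ := fun k => fromRows (Y k) 1
  have hentry : ∀ k l, ((x k : ℂ) + x l)⁻¹ • ((V k)ᴴ * P * V l) + (Y k)ᴴ * -K * Y l =
      ((x k : ℂ) + x l)⁻¹ • (φ (x k) + (φ (x l))ᴴ) := by
    intro k l
    have hkl : (x k : ℂ) + x l ≠ 0 := by exact_mod_cast (add_pos (hx k) (hx l)).ne'
    rw [conjTranspose_fromRows_mul_mul_fromRows A B C D (by simpa using hK.isHermitian.neg)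
      (hu k) (hu l), hφ, hφ]
    simp only [Y, Complex.star_def, Complex.conj_ofReal, conjTranspose_conjTranspose, smul_add,
      smul_smul, inv_mul_cancel₀ hkl, one_smul, Matrix.mul_neg, Matrix.neg_mul]
    abel
  suffices hQ : (of fun k l => star (c k) ⬝ᵥ ((((x k : ℂ) + x l)⁻¹ •
      (φ (x k) + (φ (x l))ᴴ)) *ᵥ c l)) =
      (of fun k l => ((x k : ℂ) + x l)⁻¹) ⊙
        ((of fun a k => (V k *ᵥ c k) a)ᴴ * P * of fun a k => (V k *ᵥ c k) a) +
      (of fun a k => (Y k *ᵥ c k) a)ᴴ * -K * of fun a k => (Y k *ᵥ c k) a by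
    rw [hQ]
    exact ((posSemidef_cauchy x hx).hadamard (hM.conjTranspose_mul_mul_same _)).add
      (hK.conjTranspose_mul_mul_same _)
  ext k l
  rw [Matrix.add_apply, hadamard_apply, of_apply, of_apply, conjTranspose_mul_mul_of_apply,
    conjTranspose_mul_mul_of_apply, star_mulVec_dotProduct_mulVec_mulVec,
    star_mulVec_dotProduct_mulVec_mulVec, ← smul_eq_mul, ← dotProduct_smul, ← smul_mulVec,
    ← dotProduct_add, ← add_mulVec, hentry]

theorem stmt8_general {N n : ℕ}
    (A : Matrix (Fin N) (Fin N) ℂ) (B : Matrix (Fin N) (Fin n) ℂ)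
    (C : Matrix (Fin n) (Fin N) ℂ) (D : Matrix (Fin n) (Fin n) ℂ)
    (H : Matrix (Fin N) (Fin N) ℂ) (hHneg : (-H).PosDef)
    (h : ((Matrix.fromBlocks H 0 0 (1 : Matrix (Fin n) (Fin n) ℂ)) *
          (Matrix.fromBlocks A B C D) +
          (Matrix.fromBlocks A B C D)ᴴ *
          (Matrix.fromBlocks H 0 0 1)).PosSemidef)
    (φ : ℝ → Matrix (Fin n) (Fin n) ℂ)
    (hφ : ∀ t : ℝ, φ t = D + C * ((t : ℂ) • (1 : Matrix (Fin N) (Fin N) ℂ) - A)⁻¹ * B) :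
    ∀ (M : ℕ) (x : Fin M → ℝ) (c : Fin M → Fin n → ℂ),
      (∀ k, 0 < x k) →
      (∀ k, IsUnit ((x k : ℂ) • (1 : Matrix (Fin N) (Fin N) ℂ) - A)) →
      (Matrix.of fun k l : Fin M =>
        star (c k) ⬝ᵥ ((((x k : ℂ) + (x l : ℂ))⁻¹ • (φ (x k) + (φ (x l))ᴴ)) *ᵥ c l)
        : Matrix (Fin M) (Fin M) ℂ).PosSemidef := by
  intro M x c hx hu
  have hH : H.IsHermitian := by simpa using hHneg.isHermitian.neg
  have hdet : IsUnit H.det := (isUnit_iff_isUnit_det H).mp (by simpa using hHneg.isUnit.neg)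
  have hK : (-H⁻¹).PosSemidef := by
    have hinv : (-H)⁻¹ = -H⁻¹ := inv_eq_left_inv (by rw [neg_mul_neg, nonsing_inv_mul _ hdet])
    exact hinv ▸ hHneg.inv.posSemidef
  have hM := h.mul_add_mul_conjTranspose_of_inverse (F := fromBlocks H⁻¹ 0 0 1)
    (by simp [IsHermitian, fromBlocks_conjTranspose, hH.inv.eq])
    (by simp [fromBlocks_multiply, nonsing_inv_mul _ hdet])
    (by simp [fromBlocks_multiply, mul_nonsing_inv _ hdet])
  exact posSemidef_transferKernel_of_dual_kyp A B C D hK hM φ hφ x hx hu c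

/-- If `H` is negative definite Hermitian and satisfies the positive real lemma
inequality for `(A,B,C,D)`, then the kernel `K(x,y) = (φ(x) + φ(y)^*)/(x+y)`,
with `φ(x) = D + C(xI-A)⁻¹B`, is positive semidefinite on the positive reals
where the resolvent exists: every Gram matrix built from such points is
positive semidefinite. -/
theorem stmt8 {N n : ℕ}
    (A : Matrix (Fin N) (Fin N) ℂ) (B : Matrix (Fin N) (Fin n) ℂ)
    (C : Matrix (Fin n) (Fin N) ℂ) (D : Matrix (Fin n) (Fin n) ℂ)
    (H : Matrix (Fin N) (Fin N) ℂ) (hH : H.IsHermitian) (hHneg : (-H).PosDef)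
    (h : ((Matrix.fromBlocks H 0 0 (1 : Matrix (Fin n) (Fin n) ℂ)) *
          (Matrix.fromBlocks A B C D) +
          (Matrix.fromBlocks A B C D)ᴴ *
          (Matrix.fromBlocks H 0 0 1)).PosSemidef)
    (φ : ℝ → Matrix (Fin n) (Fin n) ℂ)
    (hφ : ∀ t : ℝ, φ t = D + C * ((t : ℂ) • (1 : Matrix (Fin N) (Fin N) ℂ) - A)⁻¹ * B) :
    ∀ (M : ℕ) (x : Fin M → ℝ) (c : Fin M → Fin n → ℂ),
      (∀ k, 0 < x k) →
      (∀ k, IsUnit ((x k : ℂ) • (1 : Matrix (Fin N) (Fin N) ℂ) - A)) →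
      (Matrix.of fun k l : Fin M =>
        star (c k) ⬝ᵥ ((((x k : ℂ) + (x l : ℂ))⁻¹ • (φ (x k) + (φ (x l))ᴴ)) *ᵥ c l)
        : Matrix (Fin M) (Fin M) ℂ).PosSemidef :=
  stmt8_general A B C D H hHneg h φ hφ
end

section
/- Let (C, A, B) ∈ ℍ^{n×N} × ℍ^{N×N} × ℍ^{N×m} be quaternionic matrices. The pair (C, A) is observable (i.e. the intersection over t ≥ 0 of ker(C Aᵗ) is {0}) if and only if the pair (χ(C), χ(A)) of complex matrices is observable; similarly (A, B) is controllable (intersection of ker(B^* A^{*t}) is {0}) iff (χ(A), χ(B)) is controllable; hence the triple (C, A, B) is minimal iff (χ(C), χ(A), χ(B)) is minimal. -/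
/-!
Writing a quaternion as `ξ₁ + ξ₂ j`, the additive bijection `ξ ↦ (ξ₁, -conj ξ₂)` from
quaternionic to complex vectors intertwines `M` with `χ(M)`. Hence `χ` is multiplicative
(test against basis vectors), commutes with `ᴴ`, and the common kernel of the matrices
`C Aᵗ` (resp. `Bᴴ (Aᴴ)ᵗ`) corresponds to that of their images under `χ`.
-/

open Matrix

open scoped Quaternion

lemma qc1_add (a b : ℍ) : qc1 (a + b) = qc1 a + qc1 b := by
  simp [qc1, Complex.ext_iff]

lemma qc2_add (a b : ℍ) : qc2 (a + b) = qc2 a + qc2 b := by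
  simp [qc2, Complex.ext_iff]

lemma qc1_zero : qc1 0 = 0 := by
  simp [qc1, Complex.ext_iff]

lemma qc2_zero : qc2 0 = 0 := by
  simp [qc2, Complex.ext_iff]

lemma qc1_one : qc1 1 = 1 := by
  simp [qc1, Complex.ext_iff]

lemma qc2_one : qc2 1 = 0 := by
  simp [qc2, Complex.ext_iff]

lemma qc1_mul (a b : ℍ) : qc1 (a * b) = qc1 a * qc1 b - qc2 a * starRingEnd ℂ (qc2 b) := by
  simp only [qc1, qc2, Complex.ext_iff, Quaternion.re_mul, Quaternion.imI_mul, Complex.sub_re,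
    Complex.sub_im, Complex.mul_re, Complex.mul_im, Complex.conj_re, Complex.conj_im]
  constructor <;> ring

lemma qc2_mul (a b : ℍ) : qc2 (a * b) = qc1 a * qc2 b + qc2 a * starRingEnd ℂ (qc1 b) := by
  simp only [qc1, qc2, Complex.ext_iff, Quaternion.imJ_mul, Quaternion.imK_mul, Complex.add_re,
    Complex.add_im, Complex.mul_re, Complex.mul_im, Complex.conj_re, Complex.conj_im]
  constructor <;> ring

lemma qc1_star (a : ℍ) : qc1 (star a) = starRingEnd ℂ (qc1 a) := by
  simp [qc1, Complex.ext_iff]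

lemma qc2_star (a : ℍ) : qc2 (star a) = -qc2 a := by
  simp [qc2, Complex.ext_iff]

lemma qc1_sum {α : Type*} (s : Finset α) (f : α → ℍ) :
    qc1 (∑ i ∈ s, f i) = ∑ i ∈ s, qc1 (f i) :=
  map_sum (AddMonoidHom.mk' qc1 qc1_add) f s

lemma qc2_sum {α : Type*} (s : Finset α) (f : α → ℍ) :
    qc2 (∑ i ∈ s, f i) = ∑ i ∈ s, qc2 (f i) :=
  map_sum (AddMonoidHom.mk' qc2 qc2_add) f s

/-- The vector counterpart of `chiM`: `ξ₁ + ξ₂ j ↦ (ξ₁, -conj ξ₂)`. -/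
noncomputable def chiVec (q : Type*) : (q → ℍ) ≃+ (q ⊕ q → ℂ) where
  toFun v := Sum.elim (fun i => qc1 (v i)) (fun i => -starRingEnd ℂ (qc2 (v i)))
  invFun w i := ⟨(w (.inl i)).re, (w (.inl i)).im, -(w (.inr i)).re, (w (.inr i)).im⟩
  left_inv v := by
    funext i
    ext <;> simp [qc1, qc2]
  right_inv w := by
    funext x
    cases x <;> simp [qc1, qc2, Complex.ext_iff]
  map_add' v v' := by
    funext x
    cases x <;> simp [qc1_add, qc2_add, add_comm]

@[simp]
lemma chiVec_inl {q : Type*} (v : q → ℍ) (i : q) : chiVec q v (.inl i) = qc1 (v i) :=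
  rfl

@[simp]
lemma chiVec_inr {q : Type*} (v : q → ℍ) (i : q) :
    chiVec q v (.inr i) = -starRingEnd ℂ (qc2 (v i)) :=
  rfl

section

variable {p q r : Type*}

lemma chiM_mulVec_chiVec [Fintype q] (M : Matrix p q ℍ) (v : q → ℍ) :
    chiM M *ᵥ chiVec q v = chiVec p (M *ᵥ v) := by
  funext x
  cases x with
  | inl i =>
    simp [chiM, mulVec, dotProduct, Fintype.sum_sum_type, qc1_sum, qc1_mul,
      Finset.sum_add_distrib, sub_eq_add_neg]
  | inr i =>
    simp [chiM, mulVec, dotProduct, Fintype.sum_sum_type, qc2_sum, qc2_mul,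
      Finset.sum_add_distrib, mul_comm]

lemma chiM_mul [Fintype q] [Fintype r] [DecidableEq r] (M : Matrix p q ℍ) (P : Matrix q r ℍ) :
    chiM (M * P) = chiM M * chiM P := by
  have hmulVec (w : r ⊕ r → ℂ) : chiM (M * P) *ᵥ w = (chiM M * chiM P) *ᵥ w := by
    obtain ⟨v, rfl⟩ := (chiVec r).surjective w
    rw [chiM_mulVec_chiVec, ← mulVec_mulVec, ← mulVec_mulVec, chiM_mulVec_chiVec,
      chiM_mulVec_chiVec]
  ext i j
  simpa [mulVec_single] using congrFun (hmulVec (Pi.single j 1)) i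

lemma chiM_one [Fintype q] [DecidableEq q] : chiM (1 : Matrix q q ℍ) = 1 := by
  have hqc2 : (1 : Matrix q q ℍ).map qc2 = 0 := by
    ext i j
    by_cases h : i = j <;> simp [one_apply, h, qc2_zero, qc2_one]
  simp [chiM, Matrix.map_one qc1 qc1_zero qc1_one, hqc2, fromBlocks_one]

lemma chiM_pow [Fintype q] [DecidableEq q] (A : Matrix q q ℍ) (t : ℕ) :
    chiM (A ^ t) = chiM A ^ t := by
  induction t with
  | zero => simp [chiM_one]
  | succ k ih => rw [pow_succ, pow_succ, chiM_mul, ih]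

lemma chiM_conjTranspose (M : Matrix p q ℍ) : chiM Mᴴ = (chiM M)ᴴ := by
  ext i j
  cases i <;> cases j <;> simp [chiM, conjTranspose_apply, qc1_star, qc2_star]

lemma chiM_common_ker_trivial_iff {ι : Type*} [Fintype q] (F : ι → Matrix p q ℍ) :
    (∀ v : q → ℍ, (∀ t, F t *ᵥ v = 0) → v = 0) ↔
      ∀ w : q ⊕ q → ℂ, (∀ t, chiM (F t) *ᵥ w = 0) → w = 0 := by
  simp only [(chiVec q).surjective.forall, chiM_mulVec_chiVec, AddEquivClass.map_eq_zero_iff]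

end

/-- `(C, A)` is observable iff `(χ(C), χ(A))` is observable; `(A, B)` is
controllable iff `(χ(A), χ(B))` is controllable; hence `(C, A, B)` is minimal
iff `(χ(C), χ(A), χ(B))` is minimal. -/
theorem stmt18 {n N m : ℕ}
    (C : Matrix (Fin n) (Fin N) (Quaternion ℝ))
    (A : Matrix (Fin N) (Fin N) (Quaternion ℝ))
    (B : Matrix (Fin N) (Fin m) (Quaternion ℝ)) :
    ((∀ v : Fin N → Quaternion ℝ, (∀ t : ℕ, (C * A ^ t) *ᵥ v = 0) → v = 0) ↔
      (∀ w : Fin N ⊕ Fin N → ℂ,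
        (∀ t : ℕ, (chiM C * (chiM A) ^ t) *ᵥ w = 0) → w = 0)) ∧
    ((∀ v : Fin N → Quaternion ℝ, (∀ t : ℕ, (Bᴴ * (Aᴴ) ^ t) *ᵥ v = 0) → v = 0) ↔
      (∀ w : Fin N ⊕ Fin N → ℂ,
        (∀ t : ℕ, ((chiM B)ᴴ * ((chiM A)ᴴ) ^ t) *ᵥ w = 0) → w = 0)) ∧
    (((∀ v : Fin N → Quaternion ℝ, (∀ t : ℕ, (C * A ^ t) *ᵥ v = 0) → v = 0) ∧
      (∀ v : Fin N → Quaternion ℝ, (∀ t : ℕ, (Bᴴ * (Aᴴ) ^ t) *ᵥ v = 0) → v = 0)) ↔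
     ((∀ w : Fin N ⊕ Fin N → ℂ,
        (∀ t : ℕ, (chiM C * (chiM A) ^ t) *ᵥ w = 0) → w = 0) ∧
      (∀ w : Fin N ⊕ Fin N → ℂ,
        (∀ t : ℕ, ((chiM B)ᴴ * ((chiM A)ᴴ) ^ t) *ᵥ w = 0) → w = 0))) := by
  have observable_iff := chiM_common_ker_trivial_iff fun t => C * A ^ t
  have controllable_iff := chiM_common_ker_trivial_iff fun t => Bᴴ * Aᴴ ^ t
  simp only [chiM_mul, chiM_pow, chiM_conjTranspose] at observable_iff controllable_iff
  exact ⟨observable_iff, controllable_iff, and_congr observable_iff controllable_iff⟩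
end
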